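/- arXiv:1210.3194 — 3 statements merged into one kernel-verified Lean document; each statement's English description precedes it below -/
import Mathlib

section
/- Let d ≥ 1 be an integer, let B ⊂ ℝ^d be a bounded Lebesgue-measurable set, let k > 0, and let T : L²(B;ℂ) → L²(B;ℂ) be a bounded linear operator. Define H : ℂ^d × ℂ^d → ℂ by H(z,w) = ∫_B exp(−i k z·y) · (T(y' ↦ exp(i k w·y')))(y) dy, where z·y = Σ_{l=1}^d z_l y_l. Then H is holomorphic separately in each of the 2d complex coordinates z₁,…,z_d, w₁,…,w_d: for each coordinate and each fixed choice of all the other coordinates, H is ℂ-differentiable as a function of that coordinate on ℂ. -/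
/-!
In a `z`-coordinate `t` the integrand has the form `exp (t * a y) * g y` with `a` bounded on the
compact set `closure B` and `g` integrable, so one may differentiate under the integral sign. In a
`w`-coordinate, moving `T` across the `L²` pairing as its adjoint `T†` gives
`H z w = ∫ exp (i k w·y) * conj ((T† (conj f_z)) y) dy` with `f_z y = exp (-i k z·y)`, an integral
of the same form.
-/

open MeasureTheory Complex Filter ComplexConjugate

lemma norm_cexp_mul_le {t a : ℂ} {r C : ℝ} (ht : ‖t‖ ≤ r) (ha : ‖a‖ ≤ C) :
    ‖cexp (t * a)‖ ≤ Real.exp (r * C) :=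
  (norm_exp_le_exp_norm _).trans <| Real.exp_le_exp.2 <| by
    rw [norm_mul]; exact mul_le_mul ht ha (norm_nonneg _) ((norm_nonneg _).trans ht)

theorem differentiable_integral_cexp_mul {X : Type*} [MeasurableSpace X] {μ : Measure X}
    {a g : X → ℂ} {C : ℝ} (ha : AEStronglyMeasurable a μ) (ha_le : ∀ᵐ x ∂μ, ‖a x‖ ≤ C)
    (hg : Integrable g μ) :
    Differentiable ℂ fun t : ℂ => ∫ x, cexp (t * a x) * g x ∂μ := by
  intro t₀
  have hmeas : ∀ t : ℂ, AEStronglyMeasurable (fun x => cexp (t * a x) * g x) μ := fun t =>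
    (continuous_exp.comp_aestronglyMeasurable (ha.const_mul t)).mul hg.1
  have hball : ∀ t ∈ Metric.ball t₀ 1, ‖t‖ ≤ ‖t₀‖ + 1 := fun t ht => by
    have := norm_le_norm_add_norm_sub' t t₀
    rw [mem_ball_iff_norm] at ht
    linarith
  refine (hasDerivAt_integral_of_dominated_loc_of_deriv_le
    (F' := fun t x => a x * (cexp (t * a x) * g x))
    (bound := fun x => C * Real.exp ((‖t₀‖ + 1) * C) * ‖g x‖)
    (Metric.ball_mem_nhds t₀ one_pos) (Eventually.of_forall hmeas) ?_ (ha.mul (hmeas t₀)) ?_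
    (hg.norm.const_mul _) ?_).2.differentiableAt
  · refine hg.bdd_mul (continuous_exp.comp_aestronglyMeasurable (ha.const_mul t₀))
      (c := Real.exp (‖t₀‖ * C)) ?_
    filter_upwards [ha_le] with x hx using norm_cexp_mul_le le_rfl hx
  · filter_upwards [ha_le] with x hx t ht
    rw [norm_mul, norm_mul, ← mul_assoc]
    exact mul_le_mul_of_nonneg_right (mul_le_mul hx (norm_cexp_mul_le (hball t ht) hx)
      (norm_nonneg _) ((norm_nonneg _).trans hx)) (norm_nonneg _)
  · filter_upwards with x t _
    exact (((hasDerivAt_id t).mul_const (a x)).cexp.mul_const (g x)).congr_deriv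
      (by rw [id]; ring)

lemma sum_update_mul_eq_add {ι R : Type*} [Fintype ι] [DecidableEq ι] [CommSemiring R]
    (v y : ι → R) (j : ι) (t : R) :
    ∑ l, Function.update v j t l * y l = t * y j + ∑ l, Function.update v j 0 l * y l := by
  rw [← Finset.add_sum_erase _ _ (Finset.mem_univ j),
    ← Finset.add_sum_erase _ _ (Finset.mem_univ j)]
  simp only [Function.update_self, zero_mul, zero_add]
  refine congrArg _ (Finset.sum_congr rfl fun l hl => ?_)
  rw [Function.update_of_ne (Finset.ne_of_mem_erase hl),
    Function.update_of_ne (Finset.ne_of_mem_erase hl)]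

lemma exists_ae_norm_le_of_continuous {X E : Type*} [MeasurableSpace X] [TopologicalSpace X]
    [SeminormedAddGroup E] {μ : Measure X} {K : Set X} (hK : IsCompact K) (hμK : ∀ᵐ x ∂μ, x ∈ K)
    {f : X → E} (hf : Continuous f) : ∃ C, ∀ᵐ x ∂μ, ‖f x‖ ≤ C := by
  obtain ⟨C, hC⟩ := hK.exists_bound_of_continuousOn hf.continuousOn
  exact ⟨C, hμK.mono hC⟩

theorem differentiable_integral_cexp_mul_sum_update {ι : Type*} [Fintype ι] [DecidableEq ι]
    {μ : Measure (EuclideanSpace ℝ ι)} {K : Set (EuclideanSpace ℝ ι)} (hK : IsCompact K)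
    (hμK : ∀ᵐ y ∂μ, y ∈ K) (c : ℂ) {g : EuclideanSpace ℝ ι → ℂ} (hg : Integrable g μ)
    (v : ι → ℂ) (j : ι) :
    Differentiable ℂ fun t : ℂ =>
      ∫ y, cexp (c * ∑ l, Function.update v j t l * (y l : ℂ)) * g y ∂μ := by
  have hcoord : Continuous fun y : EuclideanSpace ℝ ι => c * (y j : ℂ) := by fun_prop
  set A := fun y : EuclideanSpace ℝ ι => cexp (c * ∑ l, Function.update v j 0 l * (y l : ℂ))
  have hA : Continuous A := by fun_prop
  have hsplit : ∀ t y, cexp (c * ∑ l, Function.update v j t l * (y l : ℂ)) * g y =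
      cexp (t * (c * y j)) * (A y * g y) := fun t y => by
    rw [sum_update_mul_eq_add, mul_add, Complex.exp_add, mul_left_comm c t]; simp only [A]; ring
  simp only [hsplit]
  obtain ⟨C, hC⟩ := exists_ae_norm_le_of_continuous hK hμK hcoord
  obtain ⟨M, hM⟩ := exists_ae_norm_le_of_continuous hK hμK hA
  exact differentiable_integral_cexp_mul hcoord.aestronglyMeasurable hC
    (hg.bdd_mul hA.aestronglyMeasurable hM)

theorem integral_mul_apply_eq_integral_mul_conj_adjoint {α : Type*} [MeasurableSpace α]
    {μ : Measure α} (T : Lp ℂ 2 μ →L[ℂ] Lp ℂ 2 μ) {f : α → ℂ} (hf : MemLp f 2 μ)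
    (g : Lp ℂ 2 μ) :
    ∫ x, f x * T g x ∂μ = ∫ x, g x * conj (T.adjoint (hf.star.toLp) x) ∂μ := by
  calc ∫ x, f x * T g x ∂μ = inner ℂ hf.star.toLp (T g) := by
        rw [L2.inner_def]
        refine integral_congr_ae ?_
        filter_upwards [hf.star.coeFn_toLp] with x hx
        rw [RCLike.inner_apply', hx, Pi.star_apply, Complex.star_def, conj_conj]
    _ = inner ℂ (T.adjoint hf.star.toLp) g := (T.adjoint_inner_left g _).symm
    _ = ∫ x, g x * conj (T.adjoint (hf.star.toLp) x) ∂μ := by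
        rw [L2.inner_def]
        exact integral_congr_ae (Eventually.of_forall fun x => by
          simp only [RCLike.inner_apply']; exact mul_comm _ _)

theorem stmt10_general (d : ℕ)
    (B : Set (EuclideanSpace ℝ (Fin d)))
    (hBbdd : Bornology.IsBounded B)
    (k : ℝ)
    (T : Lp ℂ 2 ((volume : Measure (EuclideanSpace ℝ (Fin d))).restrict B)
      →L[ℂ] Lp ℂ 2 ((volume : Measure (EuclideanSpace ℝ (Fin d))).restrict B))
    (E : (Fin d → ℂ) → Lp ℂ 2 ((volume : Measure (EuclideanSpace ℝ (Fin d))).restrict B))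
    (hE : ∀ w : Fin d → ℂ, (E w : EuclideanSpace ℝ (Fin d) → ℂ)
      =ᵐ[(volume : Measure (EuclideanSpace ℝ (Fin d))).restrict B]
      fun y => Complex.exp (Complex.I * k * ∑ l, w l * (y l : ℂ)))
    (H : (Fin d → ℂ) → (Fin d → ℂ) → ℂ)
    (hH : ∀ z w : Fin d → ℂ, H z w =
      ∫ y : EuclideanSpace ℝ (Fin d),
        Complex.exp (-(Complex.I * k * ∑ l, z l * (y l : ℂ))) * (T (E w)) y
        ∂((volume : Measure (EuclideanSpace ℝ (Fin d))).restrict B)) :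
    ∀ z w : Fin d → ℂ, ∀ j : Fin d,
      Differentiable ℂ (fun t : ℂ => H (Function.update z j t) w) ∧
      Differentiable ℂ (fun t : ℂ => H z (Function.update w j t)) := by
  intro z w j
  have : IsFiniteMeasure (volume.restrict B) := isFiniteMeasure_restrict.2 hBbdd.measure_lt_top.ne
  have hK := hBbdd.isCompact_closure
  have hμK : ∀ᵐ y ∂volume.restrict B, y ∈ closure B :=
    ae_restrict_of_ae_restrict_of_subset subset_closure
      (ae_restrict_mem isClosed_closure.measurableSet)
  constructor
  · simpa only [hH, neg_mul] using differentiable_integral_cexp_mul_sum_update hK hμK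
      (-(I * k)) ((Lp.memLp (T (E w))).integrable one_le_two) z j
  · have hf : MemLp (fun y : EuclideanSpace ℝ (Fin d) => cexp (-(I * k * ∑ l, z l * (y l : ℂ))))
        2 (volume.restrict B) := by
      have hcont : Continuous fun y : EuclideanSpace ℝ (Fin d) =>
          cexp (-(I * k * ∑ l, z l * (y l : ℂ))) := by fun_prop
      obtain ⟨C, hC⟩ := exists_ae_norm_le_of_continuous hK hμK hcont
      exact .of_bound hcont.aestronglyMeasurable C hC
    have hdual : ∀ w', H z w' = ∫ y, cexp (I * k * ∑ l, w' l * (y l : ℂ)) *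
        conj (T.adjoint hf.star.toLp y) ∂volume.restrict B := fun w' => by
      rw [hH, integral_mul_apply_eq_integral_mul_conj_adjoint T hf]
      exact integral_congr_ae ((hE w').mul (ae_eq_refl _))
    simp only [hdual]
    exact differentiable_integral_cexp_mul_sum_update hK hμK (I * k)
      ((Lp.memLp _).star.integrable one_le_two) w j

/-- Let `B ⊂ ℝ^d` be bounded measurable, `k > 0`, and
`T : L²(B;ℂ) → L²(B;ℂ)` a bounded linear operator. Then
`H(z,w) = ∫_B exp(−ik z·y) (T(exp(ik w··)))(y) dy` is holomorphic separately in each of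
the `2d` complex coordinates `z₁,…,z_d,w₁,…,w_d`. -/
theorem stmt10 (d : ℕ) (hd : 1 ≤ d)
    (B : Set (EuclideanSpace ℝ (Fin d))) (hBmeas : MeasurableSet B)
    (hBbdd : Bornology.IsBounded B)
    (k : ℝ) (hk : 0 < k)
    (T : Lp ℂ 2 ((volume : Measure (EuclideanSpace ℝ (Fin d))).restrict B)
      →L[ℂ] Lp ℂ 2 ((volume : Measure (EuclideanSpace ℝ (Fin d))).restrict B))
    (E : (Fin d → ℂ) → Lp ℂ 2 ((volume : Measure (EuclideanSpace ℝ (Fin d))).restrict B))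
    (hE : ∀ w : Fin d → ℂ, (E w : EuclideanSpace ℝ (Fin d) → ℂ)
      =ᵐ[(volume : Measure (EuclideanSpace ℝ (Fin d))).restrict B]
      fun y => Complex.exp (Complex.I * k * ∑ l, w l * (y l : ℂ)))
    (H : (Fin d → ℂ) → (Fin d → ℂ) → ℂ)
    (hH : ∀ z w : Fin d → ℂ, H z w =
      ∫ y : EuclideanSpace ℝ (Fin d),
        Complex.exp (-(Complex.I * k * ∑ l, z l * (y l : ℂ))) * (T (E w)) y
        ∂((volume : Measure (EuclideanSpace ℝ (Fin d))).restrict B)) :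
    ∀ z w : Fin d → ℂ, ∀ j : Fin d,
      Differentiable ℂ (fun t : ℂ => H (Function.update z j t) w) ∧
      Differentiable ℂ (fun t : ℂ => H z (Function.update w j t)) :=
  stmt10_general d B hBbdd k T E hE H hH
end

section
/- Let d ≥ 1 be an integer, let B ⊂ ℝ^d be a bounded Lebesgue-measurable set, let k > 0, and let T : L²(B;ℂ) → L²(B;ℂ) be a bounded linear operator. Then the function H : ℂ^d × ℂ^d → ℂ defined by H(z,w) = ∫_B exp(−i k z·y) · (T(y' ↦ exp(i k w·y')))(y) dy, where z·y = Σ_{l=1}^d z_l y_l, is jointly holomorphic (ℂ-analytic) on ℂ^d × ℂ^d ≅ ℂ^{2d}. -/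
/-!
If `B` lies in the ball of radius `R`, then on `B` the function `y ↦ exp (c ∑ l, w l * y l)` is the
Banach-algebra exponential `exp (M w)` of the bounded continuous function
`M w = c ∑ l, w l • clamp_R (y l)`, with `M` continuous linear in `w`. Composing with the bounded
inclusion of bounded continuous functions into `L²` shows that `w ↦ E w` is analytic, and
`H (z, w) = ∫ E (-z) * T (E w)` is a continuous bilinear pairing of analytic maps.
-/

open MeasureTheory
open scoped BoundedContinuousFunction

namespace BoundedContinuousFunction

variable {α : Type*} [TopologicalSpace α]

theorem exp_apply (f : α →ᵇ ℂ) (y : α) : NormedSpace.exp f y = Complex.exp (f y) := by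
  let eval : (α →ᵇ ℂ) →+* ℂ :=
    { toFun := fun f => f y
      map_one' := rfl
      map_mul' := fun _ _ => rfl
      map_zero' := rfl
      map_add' := fun _ _ => rfl }
  rw [Complex.exp_eq_exp_ℂ]
  exact NormedSpace.map_exp eval (evalCLM ℂ y).continuous f

end BoundedContinuousFunction

theorem analyticOnNhd_of_forall_ae_eq_exp {α F : Type*} [TopologicalSpace α] [MeasurableSpace α]
    [BorelSpace α] [NormedAddCommGroup F] [NormedSpace ℂ F] {p : ENNReal} [Fact (1 ≤ p)]
    {μ : Measure α} [IsFiniteMeasure μ] (M : F →L[ℂ] (α →ᵇ ℂ)) (E : F → Lp ℂ p μ)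
    (hE : ∀ w, E w =ᵐ[μ] fun y => Complex.exp (M w y)) :
    AnalyticOnNhd ℂ E Set.univ := by
  have hE_toLp : E = fun w => BoundedContinuousFunction.toLp p μ ℂ (NormedSpace.exp (M w)) := by
    funext w
    refine Lp.ext ((hE w).trans ?_)
    filter_upwards [BoundedContinuousFunction.coeFn_toLp p μ ℂ (NormedSpace.exp (M w))] with y hy
    rw [hy, BoundedContinuousFunction.exp_apply]
  rw [hE_toLp]
  intro w _
  exact (ContinuousLinearMap.analyticAt _ _).comp
    ((NormedSpace.exp_analytic _).comp (M.analyticAt w))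

noncomputable def clampedCoord {d : ℕ} (R : ℝ) (l : Fin d) : EuclideanSpace ℝ (Fin d) →ᵇ ℂ :=
  .ofNormedAddCommGroup (fun y => ((max (-R) (min R (y l)) : ℝ) : ℂ)) (by fun_prop) |R|
    (fun y => by
      rw [Complex.norm_real, Real.norm_eq_abs, abs_le]
      constructor <;> grind [le_abs_self, neg_abs_le])

theorem clampedCoord_apply_of_norm_le {d : ℕ} {R : ℝ} (l : Fin d) {y : EuclideanSpace ℝ (Fin d)}
    (hy : ‖y‖ ≤ R) : clampedCoord R l y = y l := by
  obtain ⟨hlo, hhi⟩ := abs_le.mp ((Real.norm_eq_abs _ ▸ PiLp.norm_apply_le y l).trans hy)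
  simp only [clampedCoord, BoundedContinuousFunction.coe_ofNormedAddCommGroup]
  rw [min_eq_right (by linarith), max_eq_right (by linarith)]

noncomputable def clampedDot {d : ℕ} (R : ℝ) : (Fin d → ℂ) →L[ℂ] EuclideanSpace ℝ (Fin d) →ᵇ ℂ :=
  ∑ l, (ContinuousLinearMap.proj l).smulRight (clampedCoord R l)

theorem clampedDot_apply_of_norm_le {d : ℕ} {R : ℝ} (w : Fin d → ℂ)
    {y : EuclideanSpace ℝ (Fin d)} (hy : ‖y‖ ≤ R) :
    clampedDot R w y = ∑ l, w l * y l := by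
  simp [clampedDot, clampedCoord_apply_of_norm_le _ hy]

theorem analyticOnNhd_of_ae_eq_exp_dot {d : ℕ} {p : ENNReal} [Fact (1 ≤ p)]
    {μ : Measure (EuclideanSpace ℝ (Fin d))} [IsFiniteMeasure μ] {R : ℝ}
    (hR : ∀ᵐ y ∂μ, ‖y‖ ≤ R) (c : ℂ) (E : (Fin d → ℂ) → Lp ℂ p μ)
    (hE : ∀ w, E w =ᵐ[μ] fun y => Complex.exp (c * ∑ l, w l * y l)) :
    AnalyticOnNhd ℂ E Set.univ := by
  refine analyticOnNhd_of_forall_ae_eq_exp (c • clampedDot R) E fun w => ?_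
  filter_upwards [hE w, hR] with y hEy hy
  rw [hEy, smul_apply, BoundedContinuousFunction.smul_apply,
    clampedDot_apply_of_norm_le w hy, smul_eq_mul]

theorem analyticOnNhd_integral_exp_dot_mul_apply {d : ℕ}
    {μ : Measure (EuclideanSpace ℝ (Fin d))} [IsFiniteMeasure μ] {R : ℝ}
    (hR : ∀ᵐ y ∂μ, ‖y‖ ≤ R) (c : ℂ) (T : Lp ℂ 2 μ →L[ℂ] Lp ℂ 2 μ) (E : (Fin d → ℂ) → Lp ℂ 2 μ)
    (hE : ∀ w, E w =ᵐ[μ] fun y => Complex.exp (c * ∑ l, w l * y l)) :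
    AnalyticOnNhd ℂ (fun p : (Fin d → ℂ) × (Fin d → ℂ) =>
      ∫ y, Complex.exp (-(c * ∑ l, p.1 l * y l)) * T (E p.2) y ∂μ) Set.univ := by
  have hEan := analyticOnNhd_of_ae_eq_exp_dot hR c E hE
  have hpair : (fun p : (Fin d → ℂ) × (Fin d → ℂ) =>
      ∫ y, Complex.exp (-(c * ∑ l, p.1 l * y l)) * T (E p.2) y ∂μ)
      = fun p => (ContinuousLinearMap.mul ℂ ℂ).lpPairing μ 2 2 (E (-p.1)) (T (E p.2)) := by
    funext p
    rw [ContinuousLinearMap.lpPairing_eq_integral]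
    refine integral_congr_ae ?_
    filter_upwards [hE (-p.1)] with y hy
    simp [hy, Finset.sum_neg_distrib]
  rw [hpair]
  exact fun p _ => (ContinuousLinearMap.analyticAt_bilinear _ _).comp
    (((hEan _ trivial).comp analyticAt_fst.neg).prod
      ((T.analyticAt _).comp ((hEan _ trivial).comp analyticAt_snd)))

theorem stmt11_general (d : ℕ)
    (B : Set (EuclideanSpace ℝ (Fin d)))
    (hBbdd : Bornology.IsBounded B)
    (k : ℝ)
    (T : Lp ℂ 2 ((volume : Measure (EuclideanSpace ℝ (Fin d))).restrict B)
      →L[ℂ] Lp ℂ 2 ((volume : Measure (EuclideanSpace ℝ (Fin d))).restrict B))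
    (E : (Fin d → ℂ) → Lp ℂ 2 ((volume : Measure (EuclideanSpace ℝ (Fin d))).restrict B))
    (hE : ∀ w : Fin d → ℂ, (E w : EuclideanSpace ℝ (Fin d) → ℂ)
      =ᵐ[(volume : Measure (EuclideanSpace ℝ (Fin d))).restrict B]
      fun y => Complex.exp (Complex.I * k * ∑ l, w l * (y l : ℂ))) :
    AnalyticOn ℂ (fun p : (Fin d → ℂ) × (Fin d → ℂ) =>
      ∫ y : EuclideanSpace ℝ (Fin d),
        Complex.exp (-(Complex.I * k * ∑ l, p.1 l * (y l : ℂ))) * (T (E p.2)) y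
        ∂((volume : Measure (EuclideanSpace ℝ (Fin d))).restrict B)) Set.univ := by
  have : IsFiniteMeasure (volume.restrict B) :=
    isFiniteMeasure_restrict.mpr hBbdd.measure_lt_top.ne
  obtain ⟨R, hR⟩ := hBbdd.subset_closedBall 0
  have hBR : ∀ᵐ y ∂volume.restrict B, ‖y‖ ≤ R :=
    (ae_restrict_iff (measurableSet_le (by fun_prop) (by fun_prop))).mpr
      (.of_forall fun y hy => mem_closedBall_zero_iff.mp (hR hy))
  exact (analyticOnNhd_integral_exp_dot_mul_apply hBR _ T E hE).analyticOn

/-- Let `B ⊂ ℝ^d` be bounded measurable, `k > 0`, and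
`T : L²(B;ℂ) → L²(B;ℂ)` a bounded linear operator. Then
`H(z,w) = ∫_B exp(−ik z·y) (T(exp(ik w··)))(y) dy` is jointly holomorphic
(`ℂ`-analytic) on `ℂ^d × ℂ^d`. -/
theorem stmt11 (d : ℕ) (hd : 1 ≤ d)
    (B : Set (EuclideanSpace ℝ (Fin d))) (hBmeas : MeasurableSet B)
    (hBbdd : Bornology.IsBounded B)
    (k : ℝ) (hk : 0 < k)
    (T : Lp ℂ 2 ((volume : Measure (EuclideanSpace ℝ (Fin d))).restrict B)
      →L[ℂ] Lp ℂ 2 ((volume : Measure (EuclideanSpace ℝ (Fin d))).restrict B))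
    (E : (Fin d → ℂ) → Lp ℂ 2 ((volume : Measure (EuclideanSpace ℝ (Fin d))).restrict B))
    (hE : ∀ w : Fin d → ℂ, (E w : EuclideanSpace ℝ (Fin d) → ℂ)
      =ᵐ[(volume : Measure (EuclideanSpace ℝ (Fin d))).restrict B]
      fun y => Complex.exp (Complex.I * k * ∑ l, w l * (y l : ℂ))) :
    AnalyticOn ℂ (fun p : (Fin d → ℂ) × (Fin d → ℂ) =>
      ∫ y : EuclideanSpace ℝ (Fin d),
        Complex.exp (-(Complex.I * k * ∑ l, p.1 l * (y l : ℂ))) * (T (E p.2)) y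
        ∂((volume : Measure (EuclideanSpace ℝ (Fin d))).restrict B)) Set.univ :=
  stmt11_general d B hBbdd k T E hE
end

section
/- Let d ≥ 1 be an integer, let B ⊂ ℝ^d be a bounded Lebesgue-measurable set, let k > 0, and let T : L²(B;ℂ) → L²(B;ℂ) be a bounded linear operator. Then the function u : ℝ^d × ℝ^d → ℂ defined by u(x,θ) = ∫_B e^{−i k x·y} · (T(y' ↦ e^{i k θ·y'}))(y) dy is jointly real analytic on ℝ^d × ℝ^d. (In the application, u restricted to S^{d−1} × S^{d−1} equals c_d^{−1} times the far field pattern u_∞(x̂;θ), so this yields the joint real analyticity of far field patterns.) -/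
/-!
Let `K` be the closure of `B`, a compact set. The plane wave `y ↦ e^{ik θ·y}` is the exponential,
in the Banach algebra `C(K, ℂ)`, of an element depending linearly on `θ`; hence `θ ↦ E θ` is real
analytic into `C(K, ℂ)` and, through the bounded embedding `C(K, ℂ) → L²(B)` given by extension by
zero, into `L²(B)`. Finally `u(x, θ) = ⟪E x, T (E θ)⟫`, and the inner product is a bounded
real-bilinear map.
-/

open MeasureTheory Bornology
open scoped ComplexConjugate

namespace ContinuousMap

theorem exp_apply {X : Type*} [TopologicalSpace X] [CompactSpace X]
    (f : C(X, ℂ)) (x : X) : NormedSpace.exp f x = Complex.exp (f x) := by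
  rw [Complex.exp_eq_exp_ℂ]
  exact NormedSpace.map_exp (evalAlgHom ℂ ℂ x) (continuous_eval_const x) f

variable {α : Type*} [TopologicalSpace α] {K : Set α}

open Classical in
noncomputable def extendByZero (f : C(K, ℂ)) (y : α) : ℂ :=
  if h : y ∈ K then f ⟨y, h⟩ else 0

theorem extendByZero_of_mem (f : C(K, ℂ)) {y : α} (h : y ∈ K) :
    f.extendByZero y = f ⟨y, h⟩ :=
  dif_pos h

theorem extendByZero_add (f g : C(K, ℂ)) :
    (f + g).extendByZero = f.extendByZero + g.extendByZero := by
  funext y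
  by_cases h : y ∈ K <;> simp [extendByZero, h]

theorem extendByZero_smul (c : ℂ) (f : C(K, ℂ)) :
    (c • f).extendByZero = c • f.extendByZero := by
  funext y
  by_cases h : y ∈ K <;> simp [extendByZero, h]

theorem continuousOn_extendByZero (f : C(K, ℂ)) : ContinuousOn f.extendByZero K := by
  rw [continuousOn_iff_continuous_domRestrict]
  convert f.continuous using 1
  funext y
  exact extendByZero_of_mem f y.2

theorem norm_extendByZero_le [CompactSpace K] (f : C(K, ℂ)) (y : α) :
    ‖f.extendByZero y‖ ≤ ‖f‖ := by
  by_cases h : y ∈ K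
  · rw [extendByZero_of_mem f h]
    exact f.norm_coe_le_norm _
  · simp [extendByZero, h]

variable [MeasurableSpace α] [OpensMeasurableSpace α] [CompactSpace K]
  {μ : Measure α} [IsFiniteMeasure μ] (p : ENNReal)

theorem memLp_extendByZero (hK : MeasurableSet K) (hμK : ∀ᵐ y ∂μ, y ∈ K) (f : C(K, ℂ)) :
    MemLp f.extendByZero p μ := by
  have hmeas : AEStronglyMeasurable f.extendByZero (μ.restrict K) :=
    f.continuousOn_extendByZero.aestronglyMeasurable hK
  rw [Measure.restrict_eq_self_of_ae_mem hμK] at hmeas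
  exact MemLp.of_bound hmeas ‖f‖ (ae_of_all _ f.norm_extendByZero_le)

variable [Fact (1 ≤ p)]

noncomputable def toLpExtendByZero (hK : MeasurableSet K) (hμK : ∀ᵐ y ∂μ, y ∈ K) :
    C(K, ℂ) →L[ℂ] Lp ℂ p μ :=
  LinearMap.mkContinuous
    { toFun := fun f => (memLp_extendByZero p hK hμK f).toLp _
      map_add' := fun f g => by
        simp only [extendByZero_add]
        exact MemLp.toLp_add _ _
      map_smul' := fun c f => by
        simp only [extendByZero_smul]
        exact MemLp.toLp_const_smul _ _ }
    (measureUnivNNReal μ ^ p.toReal⁻¹)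
    (fun f => Lp.norm_le_of_ae_bound (norm_nonneg f) <| by
      filter_upwards [MemLp.coeFn_toLp (memLp_extendByZero p hK hμK f)] with y hy
      simpa only [LinearMap.coe_mk, AddHom.coe_mk, hy] using f.norm_extendByZero_le y)

theorem coeFn_toLpExtendByZero (hK : MeasurableSet K) (hμK : ∀ᵐ y ∂μ, y ∈ K) (f : C(K, ℂ)) :
    toLpExtendByZero p hK hμK f =ᵐ[μ] f.extendByZero :=
  (memLp_extendByZero p hK hμK f).coeFn_toLp

end ContinuousMap

section PlaneWave

variable {d : ℕ}

noncomputable def planeWavePhase (K : Set (EuclideanSpace ℝ (Fin d))) [CompactSpace K] (k : ℝ) :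
    EuclideanSpace ℝ (Fin d) →L[ℝ] C(K, ℂ) :=
  LinearMap.toContinuousLinearMap
    { toFun := fun θ => ⟨fun y => Complex.I * k * (∑ l, θ l * (y : EuclideanSpace ℝ (Fin d)) l : ℝ),
        by fun_prop⟩
      map_add' := fun θ θ' => by
        ext y
        simp only [ContinuousMap.coe_mk, ContinuousMap.add_apply, PiLp.add_apply, add_mul,
          Finset.sum_add_distrib, Complex.ofReal_add]
        ring
      map_smul' := fun r θ => by
        ext y
        simp only [ContinuousMap.coe_mk, ContinuousMap.smul_apply, PiLp.smul_apply, smul_eq_mul,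
          RingHom.id_apply, Complex.real_smul, mul_assoc, ← Finset.mul_sum, Complex.ofReal_mul]
        ring }

theorem planeWavePhase_apply (K : Set (EuclideanSpace ℝ (Fin d))) [CompactSpace K] (k : ℝ)
    (θ : EuclideanSpace ℝ (Fin d)) (y : K) :
    planeWavePhase K k θ y = Complex.I * k * (∑ l, θ l * (y : EuclideanSpace ℝ (Fin d)) l : ℝ) :=
  rfl

end PlaneWave

theorem integral_conj_mul_eq_inner {α : Type*} [MeasurableSpace α] {μ : Measure α}
    (e f : Lp ℂ 2 μ) {g : α → ℂ} (he : e =ᵐ[μ] g) :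
    ∫ y, conj (g y) * f y ∂μ = inner ℂ e f := by
  rw [L2.inner_def]
  refine integral_congr_ae ?_
  filter_upwards [he] with y hy
  rw [RCLike.inner_apply, hy, mul_comm]

theorem stmt12_general (d : ℕ)
    (B : Set (EuclideanSpace ℝ (Fin d)))
    (hBbdd : Bornology.IsBounded B)
    (k : ℝ)
    (T : Lp ℂ 2 ((volume : Measure (EuclideanSpace ℝ (Fin d))).restrict B)
      →L[ℂ] Lp ℂ 2 ((volume : Measure (EuclideanSpace ℝ (Fin d))).restrict B))
    (E : EuclideanSpace ℝ (Fin d) →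
      Lp ℂ 2 ((volume : Measure (EuclideanSpace ℝ (Fin d))).restrict B))
    (hE : ∀ θ : EuclideanSpace ℝ (Fin d), (E θ : EuclideanSpace ℝ (Fin d) → ℂ)
      =ᵐ[(volume : Measure (EuclideanSpace ℝ (Fin d))).restrict B]
      fun y => Complex.exp (Complex.I * k * (∑ l, θ l * y l : ℝ))) :
    AnalyticOn ℝ (fun p : EuclideanSpace ℝ (Fin d) × EuclideanSpace ℝ (Fin d) =>
      ∫ y : EuclideanSpace ℝ (Fin d),
        Complex.exp (-(Complex.I * k * (∑ l, p.1 l * y l : ℝ))) * (T (E p.2)) y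
        ∂((volume : Measure (EuclideanSpace ℝ (Fin d))).restrict B)) Set.univ := by
  have : CompactSpace (closure B) := isCompact_iff_compactSpace.mp hBbdd.isCompact_closure
  have : IsFiniteMeasure (volume.restrict B) := ⟨by simpa using hBbdd.measure_lt_top⟩
  have hB : ∀ᵐ y ∂volume.restrict B, y ∈ closure B :=
    ae_restrict_of_ae_restrict_of_subset subset_closure
      (ae_restrict_mem isClosed_closure.measurableSet)
  let J := ContinuousMap.toLpExtendByZero 2 isClosed_closure.measurableSet hB
  have hE_eq (θ) : E θ = J (NormedSpace.exp (planeWavePhase (closure B) k θ)) := by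
    refine Lp.ext ((hE θ).trans ?_)
    filter_upwards [ContinuousMap.coeFn_toLpExtendByZero 2 _ hB _, hB] with y hy hyB
    rw [hy, ContinuousMap.extendByZero_of_mem _ hyB, ContinuousMap.exp_apply,
      planeWavePhase_apply]
  have hE_an (θ) : AnalyticAt ℝ E θ := by
    rw [funext hE_eq]
    exact (J.analyticAt _).restrictScalars.comp
      ((NormedSpace.exp_analytic (𝕂 := ℝ) _).comp ((planeWavePhase (closure B) k).analyticAt θ))
  have hu : ∀ p : EuclideanSpace ℝ (Fin d) × EuclideanSpace ℝ (Fin d),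
      ∫ y, Complex.exp (-(Complex.I * k * (∑ l, p.1 l * y l : ℝ))) * (T (E p.2)) y
        ∂volume.restrict B = inner ℂ (E p.1) (T (E p.2)) := fun p => by
    rw [← integral_conj_mul_eq_inner _ _ (hE p.1)]
    simp only [← Complex.exp_conj, map_mul, Complex.conj_I, Complex.conj_ofReal, neg_mul]
  simp only [hu]
  intro p _
  exact ((isBoundedBilinearMap_inner (𝕜 := ℂ)).toContinuousLinearMap.analyticAt_bilinear _).comp
    (((hE_an p.1).comp analyticAt_fst).prod
      ((T.analyticAt _).restrictScalars.comp ((hE_an p.2).comp analyticAt_snd))) |>.analyticWithinAt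

/-- Let `B ⊂ ℝ^d` be bounded measurable, `k > 0`, and
`T : L²(B;ℂ) → L²(B;ℂ)` a bounded linear operator. Then
`u(x,θ) = ∫_B e^{−ik x·y} (T(e^{ik θ··}))(y) dy` is jointly real analytic on
`ℝ^d × ℝ^d`. (Restricted to `S^{d−1} × S^{d−1}` this is `c_d⁻¹` times the far field
pattern, yielding the joint real analyticity of far field patterns.) -/
theorem stmt12 (d : ℕ) (hd : 1 ≤ d)
    (B : Set (EuclideanSpace ℝ (Fin d))) (hBmeas : MeasurableSet B)
    (hBbdd : Bornology.IsBounded B)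
    (k : ℝ) (hk : 0 < k)
    (T : Lp ℂ 2 ((volume : Measure (EuclideanSpace ℝ (Fin d))).restrict B)
      →L[ℂ] Lp ℂ 2 ((volume : Measure (EuclideanSpace ℝ (Fin d))).restrict B))
    (E : EuclideanSpace ℝ (Fin d) →
      Lp ℂ 2 ((volume : Measure (EuclideanSpace ℝ (Fin d))).restrict B))
    (hE : ∀ θ : EuclideanSpace ℝ (Fin d), (E θ : EuclideanSpace ℝ (Fin d) → ℂ)
      =ᵐ[(volume : Measure (EuclideanSpace ℝ (Fin d))).restrict B]
      fun y => Complex.exp (Complex.I * k * (∑ l, θ l * y l : ℝ))) :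
    AnalyticOn ℝ (fun p : EuclideanSpace ℝ (Fin d) × EuclideanSpace ℝ (Fin d) =>
      ∫ y : EuclideanSpace ℝ (Fin d),
        Complex.exp (-(Complex.I * k * (∑ l, p.1 l * y l : ℝ))) * (T (E p.2)) y
        ∂((volume : Measure (EuclideanSpace ℝ (Fin d))).restrict B)) Set.univ :=
  stmt12_general d B hBbdd k T E hE
end
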